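/- Let H, H¹ be right-continuous increasing functions on [0,∞) with H(u⁻) < 1 for u ≤ t, H¹ absolutely continuous with respect to Lebesgue measure with H^{1\prime}(u)(1−H(u⁻))^{−2} integrable, and let H_n, H_n^1 be step functions (empirical subdistribution functions) converging uniformly to H, H¹ on [0,t]. Then ∫₀ᵗ (1 − H_n(u⁻))^{−1} dH_n^1(u) → ∫₀ᵗ (1 − H(u⁻))^{−1} dH¹(u) as n → ∞. -/

import Mathlib

open MeasureTheory Filter Function Topology Set
open scoped ENNReal

/-!
Pick `c` with `H(t⁻) < c < 1` and let `φ x = (1 - min x c)⁻¹`, which is monotone and uniformly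
continuous. On `(0, t]` the integrands are `(φ ∘ H)(u⁻)` and, for large `n`, `(φ ∘ Hₙ)(u⁻)`, and
`φ ∘ Hₙ → φ ∘ H` uniformly. So it suffices that `(F, G) ↦ ∫_{(a,b]} F(u⁻) dG(u)` is continuous
for uniform convergence on `[a, b]` at a Stieltjes `F`. Replacing `Fₙ` by `F` costs at most
`sup |Fₙ - F|` times the bounded mass of `dGₙ`. For fixed `F`, Fubini on the triangle
`a < v < u ≤ b` gives `∫ F(u⁻) dGₙ(u) = F a (Gₙ b - Gₙ a) + ∫ (Gₙ b - Gₙ v) dF(v)`, which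
converges since `Gₙ → G` uniformly and `dF` is finite on `(a, b]`.
-/

theorem Monotone.dist_leftLim_le {f g : ℝ → ℝ} (hf : Monotone f) (hg : Monotone g) {u δ : ℝ}
    (h : ∀ᶠ v in 𝓝[<] u, dist (f v) (g v) ≤ δ) : dist (leftLim f u) (leftLim g u) ≤ δ :=
  _root_.le_of_tendsto ((hf.tendsto_leftLim u).dist (hg.tendsto_leftLim u)) h

theorem TendstoUniformlyOn.leftLim {ι : Type*} {l : Filter ι} {f : ι → ℝ → ℝ} {g : ℝ → ℝ}
    (hf : ∀ i, Monotone (f i)) (hg : Monotone g) {a b : ℝ}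
    (h : TendstoUniformlyOn f g l (Icc a b)) :
    TendstoUniformlyOn (fun i => leftLim (f i)) (leftLim g) l (Ioc a b) := by
  rw [Metric.tendstoUniformlyOn_iff] at h ⊢
  intro ε hε
  filter_upwards [h (ε / 2) (half_pos hε)] with i hi u hu
  have hclose : ∀ᶠ v in 𝓝[<] u, dist (g v) (f i v) ≤ ε / 2 := by
    filter_upwards [Ioo_mem_nhdsLT hu.1] with v hv
    exact (hi v ⟨hv.1.le, hv.2.le.trans hu.2⟩).le
  exact (hg.dist_leftLim_le (hf i) hclose).trans_lt (half_lt_self hε)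

theorem Monotone.leftLim_comp {f : ℝ → ℝ} (hf : Monotone f) {φ : ℝ → ℝ} {u : ℝ}
    (hφ : ContinuousAt φ (leftLim f u)) : leftLim (φ ∘ f) u = φ (leftLim f u) :=
  leftLim_eq_of_tendsto (hφ.tendsto.comp (hf.tendsto_leftLim u))

def StieltjesFunction.comp {R : Type*} [LinearOrder R] [TopologicalSpace R]
    (f : StieltjesFunction R) {φ : ℝ → ℝ} (hφ : Monotone φ) (hφc : Continuous φ) :
    StieltjesFunction R where
  toFun := φ ∘ f
  mono' := hφ.comp f.mono
  right_continuous' x := hφc.continuousAt.comp_continuousWithinAt (f.right_continuous x)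

theorem MeasureTheory.LocallyIntegrable.integrableOn_Ioc {f : ℝ → ℝ} {μ : Measure ℝ}
    (hf : LocallyIntegrable f μ) (a b : ℝ) : IntegrableOn f (Ioc a b) μ :=
  (hf.integrableOn_isCompact isCompact_Icc).mono_set Ioc_subset_Icc_self

theorem lintegral_measure_Ioo_eq_lintegral_measure_Ioc (μ ν : Measure ℝ) [SFinite μ]
    [SFinite ν] (a b : ℝ) :
    ∫⁻ u in Ioc a b, ν (Ioo a u) ∂μ = ∫⁻ v in Ioc a b, μ (Ioc v b) ∂ν := by
  set T : Set (ℝ × ℝ) := {p | a < p.2 ∧ p.2 < p.1 ∧ p.1 ≤ b}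
  have hT : MeasurableSet T :=
    (measurableSet_lt measurable_const measurable_snd).inter
      ((measurableSet_lt measurable_snd measurable_fst).inter
        (measurableSet_le measurable_fst measurable_const))
  calc ∫⁻ u in Ioc a b, ν (Ioo a u) ∂μ = μ.prod ν T := by
        rw [Measure.prod_apply hT, ← lintegral_indicator measurableSet_Ioc]
        refine lintegral_congr fun u => ?_
        by_cases hu : u ∈ Ioc a b
        · rw [indicator_of_mem hu]
          congr 1
          ext v; simp [T, hu.2]
        · rw [indicator_of_notMem hu, eq_comm, measure_eq_zero_iff_ae_notMem]
          refine Eventually.of_forall fun v hv => hu ⟨hv.1.trans hv.2.1, hv.2.2⟩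
    _ = ∫⁻ v in Ioc a b, μ (Ioc v b) ∂ν := by
        rw [Measure.prod_apply_symm hT, ← lintegral_indicator measurableSet_Ioc]
        refine lintegral_congr fun v => ?_
        by_cases hv : v ∈ Ioc a b
        · rw [indicator_of_mem hv]
          congr 1
          ext u; simp [T, hv.1]
        · rw [indicator_of_notMem hv, measure_eq_zero_iff_ae_notMem]
          refine Eventually.of_forall fun u hu => hv ⟨hu.1, hu.2.1.le.trans hu.2.2⟩

theorem integral_measureReal_Ioo_eq_integral_measureReal_Ioc (μ ν : Measure ℝ)
    [IsLocallyFiniteMeasure μ] [IsLocallyFiniteMeasure ν] (a b : ℝ) :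
    ∫ u in Ioc a b, ν.real (Ioo a u) ∂μ = ∫ v in Ioc a b, μ.real (Ioc v b) ∂ν := by
  simp only [measureReal_def]
  rw [integral_toReal, integral_toReal, lintegral_measure_Ioo_eq_lintegral_measure_Ioc]
  · exact (Antitone.measurable fun v w h => measure_mono (Ioc_subset_Ioc_left h)).aemeasurable
  · exact Eventually.of_forall fun v => measure_Ioc_lt_top
  · exact (Monotone.measurable fun u w h => measure_mono (Ioo_subset_Ioo_right h)).aemeasurable
  · exact Eventually.of_forall fun u => measure_Ioo_lt_top

theorem StieltjesFunction.setIntegral_leftLim (F G : StieltjesFunction ℝ) {a b : ℝ}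
    (hab : a ≤ b) :
    ∫ u in Ioc a b, leftLim F u ∂G.measure
      = F a * (G b - G a) + ∫ v in Ioc a b, (G b - G v) ∂F.measure := by
  have hF : EqOn (leftLim F) (fun u => F a + F.measure.real (Ioo a u)) (Ioc a b) := by
    intro u hu
    dsimp only
    rw [measureReal_def, F.measure_Ioo,
      ENNReal.toReal_ofReal (sub_nonneg.2 (F.mono.le_leftLim hu.1))]
    ring
  have hG : EqOn (fun v => G b - G v) (fun v => G.measure.real (Ioc v b)) (Ioc a b) := by
    intro v hv
    dsimp only
    rw [measureReal_def, G.measure_Ioc, ENNReal.toReal_ofReal (sub_nonneg.2 (G.mono hv.2))]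
  have hint : IntegrableOn (fun u => F.measure.real (Ioo a u)) (Ioc a b) G.measure :=
    (Monotone.locallyIntegrable fun u w h => measureReal_mono (Ioo_subset_Ioo_right h)
      measure_Ioo_lt_top.ne).integrableOn_Ioc a b
  have hconst : IntegrableOn (fun _ => F a) (Ioc a b) G.measure :=
    integrableOn_const measure_Ioc_lt_top.ne
  rw [setIntegral_congr_fun measurableSet_Ioc hF, setIntegral_congr_fun measurableSet_Ioc hG,
    integral_add hconst hint, setIntegral_const,
    integral_measureReal_Ioo_eq_integral_measureReal_Ioc, measureReal_def, G.measure_Ioc,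
    ENNReal.toReal_ofReal (sub_nonneg.2 (G.mono hab)), smul_eq_mul, mul_comm]

theorem tendsto_setIntegral_sub_of_tendstoUniformlyOn {α ι : Type*} [MeasurableSpace α]
    {l : Filter ι} {μ : ι → Measure α} {s : Set α} {f : ι → α → ℝ} {g : α → ℝ}
    (h : TendstoUniformlyOn f g l s) {C : ℝ≥0∞} (hC : C ≠ ∞) (hμ : ∀ᶠ i in l, μ i s ≤ C)
    (hf : ∀ᶠ i in l, IntegrableOn (f i) s (μ i)) (hg : ∀ᶠ i in l, IntegrableOn g s (μ i)) :
    Tendsto (fun i => ∫ x in s, f i x ∂μ i - ∫ x in s, g x ∂μ i) l (𝓝 0) := by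
  rw [Metric.tendsto_nhds]
  intro ε hε
  have hδ : 0 < ε / (C.toReal + 1) := by positivity
  filter_upwards [Metric.tendstoUniformlyOn_iff.1 h _ hδ, hμ, hf, hg] with i hi hμi hfi hgi
  have hbound : ∀ x ∈ s, ‖f i x - g x‖ ≤ ε / (C.toReal + 1) := fun x hx => by
    rw [← dist_eq_norm, dist_comm]; exact (hi x hx).le
  have hmass : (μ i).real s ≤ C.toReal := ENNReal.toReal_mono hC hμi
  rw [dist_zero_right, ← integral_sub hfi hgi]
  calc ‖∫ x in s, f i x - g x ∂μ i‖ ≤ ε / (C.toReal + 1) * (μ i).real s :=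
        norm_setIntegral_le_of_norm_le_const (hμi.trans_lt hC.lt_top) hbound
    _ ≤ ε / (C.toReal + 1) * C.toReal := by gcongr
    _ < ε := by
        rw [div_mul_eq_mul_div, div_lt_iff₀ (by positivity)]
        nlinarith

theorem tendsto_setIntegral_leftLim_of_tendstoUniformlyOn {ι : Type*} {l : Filter ι}
    {Fn : ι → ℝ → ℝ} {F : StieltjesFunction ℝ} {Gn : ι → StieltjesFunction ℝ}
    {G : StieltjesFunction ℝ} {a b : ℝ} (hab : a ≤ b) (hFn : ∀ i, Monotone (Fn i))
    (hF : TendstoUniformlyOn Fn F l (Icc a b))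
    (hG : TendstoUniformlyOn (fun i => Gn i) G l (Icc a b)) :
    Tendsto (fun i => ∫ u in Ioc a b, leftLim (Fn i) u ∂(Gn i).measure) l
      (𝓝 (∫ u in Ioc a b, leftLim F u ∂G.measure)) := by
  have hGa : Tendsto (fun i => Gn i a) l (𝓝 (G a)) := hG.tendsto_at ⟨le_rfl, hab⟩
  have hGb : Tendsto (fun i => Gn i b) l (𝓝 (G b)) := hG.tendsto_at ⟨hab, le_rfl⟩
  have hmass : ∀ᶠ i in l, (Gn i).measure (Ioc a b) ≤ ENNReal.ofReal (G b - G a + 1) := by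
    filter_upwards [(hGb.sub hGa).eventually (gt_mem_nhds (lt_add_one _))] with i hi
    rw [(Gn i).measure_Ioc]
    exact ENNReal.ofReal_le_ofReal hi.le
  have hclose : Tendsto (fun i => ∫ u in Ioc a b, leftLim (Fn i) u ∂(Gn i).measure
      - ∫ u in Ioc a b, leftLim F u ∂(Gn i).measure) l (𝓝 0) :=
    tendsto_setIntegral_sub_of_tendstoUniformlyOn (hF.leftLim hFn F.mono) ENNReal.ofReal_ne_top
      hmass (Eventually.of_forall fun i => (hFn i).leftLim.locallyIntegrable.integrableOn_Ioc a b)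
      (Eventually.of_forall fun i => F.mono.leftLim.locallyIntegrable.integrableOn_Ioc a b)
  have htail : Tendsto (fun i => ∫ v in Ioc a b, (Gn i b - Gn i v) ∂F.measure) l
      (𝓝 (∫ v in Ioc a b, (G b - G v) ∂F.measure)) := by
    have hunif : TendstoUniformlyOn (fun i v => Gn i b - Gn i v) (fun v => G b - G v) l
        (Ioc a b) :=
      (hGb.tendstoUniformlyOn_const _).sub (hG.mono Ioc_subset_Icc_self)
    have hanti : ∀ H : StieltjesFunction ℝ, Antitone fun v => H b - H v :=
      fun H v w hvw => sub_le_sub_left (H.mono hvw) _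
    exact tendsto_sub_nhds_zero_iff.1 (tendsto_setIntegral_sub_of_tendstoUniformlyOn hunif
      measure_Ioc_lt_top.ne (Eventually.of_forall fun _ => le_rfl)
      (Eventually.of_forall fun i => (hanti (Gn i)).locallyIntegrable.integrableOn_Ioc a b)
      (Eventually.of_forall fun _ => (hanti G).locallyIntegrable.integrableOn_Ioc a b))
  have hfixed : Tendsto (fun i => ∫ u in Ioc a b, leftLim F u ∂(Gn i).measure) l
      (𝓝 (∫ u in Ioc a b, leftLim F u ∂G.measure)) := by
    simp only [F.setIntegral_leftLim _ hab]
    exact (tendsto_const_nhds.mul (hGb.sub hGa)).add htail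
  simpa using hclose.add hfixed

theorem monotone_inv_one_sub_min {c : ℝ} (hc : c < 1) :
    Monotone fun x : ℝ => (1 - min x c)⁻¹ := fun x y hxy =>
  inv_anti₀ (by linarith [min_le_right y c]) (by linarith [min_le_min_right c hxy])

theorem uniformContinuous_inv_one_sub_min {c : ℝ} (hc : c < 1) :
    UniformContinuous fun x : ℝ => (1 - min x c)⁻¹ := by
  refine (uniformContinuous_const.sub (LipschitzWith.id.min_const c).uniformContinuous).inv₀ ?_
  refine mem_of_superset (Iio_mem_nhds (sub_pos.2 hc)) ?_
  rintro _ hy ⟨x, rfl⟩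
  have : 1 - min x c < 1 - c := hy
  linarith [min_le_right x c]

theorem nelson_aalen_consistency_general
    (t : ℝ) (ht : 0 < t)
    (H H1 : StieltjesFunction ℝ) (Hn Hn1 : ℕ → StieltjesFunction ℝ)
    (hHlt : ∀ u ∈ Set.Icc (0 : ℝ) t, leftLim (⇑H) u < 1)
    (hconv : TendstoUniformlyOn (fun n => ⇑(Hn n)) (⇑H) atTop (Set.Icc (0 : ℝ) t))
    (hconv1 : TendstoUniformlyOn (fun n => ⇑(Hn1 n)) (⇑H1) atTop
      (Set.Icc (0 : ℝ) t)) :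
    Tendsto
      (fun n => ∫ u in Set.Ioc (0 : ℝ) t,
        (1 - leftLim (⇑(Hn n)) u)⁻¹ ∂(Hn1 n).measure)
      atTop
      (𝓝 (∫ u in Set.Ioc (0 : ℝ) t, (1 - leftLim (⇑H) u)⁻¹ ∂H1.measure)) := by
  obtain ⟨c, hHc, hc⟩ := exists_between (hHlt t ⟨ht.le, le_rfl⟩)
  set φ : ℝ → ℝ := fun x => (1 - min x c)⁻¹
  have hφ : UniformContinuous φ := uniformContinuous_inv_one_sub_min hc
  have hleftLim : ∀ {f : ℝ → ℝ}, Monotone f → ∀ u, leftLim f u ≤ c →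
      leftLim (φ ∘ f) u = (1 - leftLim f u)⁻¹ := fun hf u hu => by
    rw [hf.leftLim_comp hφ.continuous.continuousAt]
    simp only [φ, min_eq_left hu]
  have hHle : ∀ u ∈ Ioc 0 t, leftLim H u ≤ c := fun u hu => (H.mono.leftLim hu.2).trans hHc.le
  have hHnle : ∀ᶠ n in atTop, ∀ u ∈ Ioc 0 t, leftLim (Hn n) u ≤ c := by
    filter_upwards [Metric.tendstoUniformlyOn_iff.1 (hconv.leftLim (fun n => (Hn n).mono) H.mono)
      _ (sub_pos.2 hHc)] with n hn u hu
    have := (abs_sub_lt_iff.1 (hn u hu)).2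
    linarith [H.mono.leftLim hu.2]
  set F := H.comp (monotone_inv_one_sub_min hc) hφ.continuous
  have hF : ∫ u in Ioc 0 t, leftLim F u ∂H1.measure
      = ∫ u in Ioc 0 t, (1 - leftLim H u)⁻¹ ∂H1.measure :=
    setIntegral_congr_fun measurableSet_Ioc fun u hu => hleftLim H.mono u (hHle u hu)
  have hlim := tendsto_setIntegral_leftLim_of_tendstoUniformlyOn (F := F) ht.le
    (fun n => (monotone_inv_one_sub_min hc).comp (Hn n).mono) (hφ.comp_tendstoUniformlyOn hconv)
    hconv1
  rw [hF] at hlim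
  refine hlim.congr' ?_
  filter_upwards [hHnle] with n hn
  exact setIntegral_congr_fun measurableSet_Ioc fun u hu => hleftLim (Hn n).mono u (hn u hu)

/-- Consistency of the Nelson-Aalen estimator: if the empirical (sub)distribution
functions Hₙ, Hₙ¹ converge uniformly on [0,t] to H, H¹, with H(u⁻) < 1 on [0,t],
H¹ absolutely continuous and (1 − H(u⁻))⁻² integrable with respect to dH¹, then
∫₀ᵗ (1 − Hₙ(u⁻))⁻¹ dHₙ¹(u) → ∫₀ᵗ (1 − H(u⁻))⁻¹ dH¹(u). -/
theorem nelson_aalen_consistency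
    (t : ℝ) (ht : 0 < t)
    (H H1 : StieltjesFunction ℝ) (Hn Hn1 : ℕ → StieltjesFunction ℝ)
    (hHlt : ∀ u ∈ Set.Icc (0 : ℝ) t, leftLim (⇑H) u < 1)
    (hac : H1.measure ≪ (volume : Measure ℝ))
    (hint : IntegrableOn (fun u => ((1 - leftLim (⇑H) u)⁻¹) ^ 2)
      (Set.Icc (0 : ℝ) t) H1.measure)
    (hconv : TendstoUniformlyOn (fun n => ⇑(Hn n)) (⇑H) atTop (Set.Icc (0 : ℝ) t))
    (hconv1 : TendstoUniformlyOn (fun n => ⇑(Hn1 n)) (⇑H1) atTop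
      (Set.Icc (0 : ℝ) t)) :
    Tendsto
      (fun n => ∫ u in Set.Ioc (0 : ℝ) t,
        (1 - leftLim (⇑(Hn n)) u)⁻¹ ∂(Hn1 n).measure)
      atTop
      (𝓝 (∫ u in Set.Ioc (0 : ℝ) t, (1 - leftLim (⇑H) u)⁻¹ ∂H1.measure)) :=
  nelson_aalen_consistency_general t ht H H1 Hn Hn1 hHlt hconv hconv1
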